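/- Let {n₁, n₂, n₃} be an orthonormal basis of ℝ³ and let ρ be a qubit density matrix. A pure-state decomposition ρ = ∑ₖ pₖ |ψₖ⟩⟨ψₖ| attains the minimal average variance in direction n₁, i.e. ∑ₖ pₖ (ΔL_{n₁})²_{ψₖ} = (ΔL_{n₁})²_ρ − (1 − Tr(ρ²))/2, if and only if it attains the maximal average variance in both orthogonal directions, i.e. ∑ₖ pₖ (ΔL_{n₂})²_{ψₖ} = (ΔL_{n₂})²_ρ and ∑ₖ pₖ (ΔL_{n₃})²_{ψₖ} = (ΔL_{n₃})²_ρ. (The minimal value equals (1/4)F_Q[ρ, L_{n₁}], since the quantum Fisher information is the convex roof of four times the variance and for qubits (ΔL_n)²_ρ − (1/4)F_Q[ρ, L_n] = (1 − Tr ρ²)/2.) -/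
import Mathlib


open Matrix BigOperators
open scoped ComplexOrder

/-- The Pauli matrix σx. -/
def sigmaX : Matrix (Fin 2) (Fin 2) ℂ := !![0, 1; 1, 0]

/-- The Pauli matrix σy. -/
def sigmaY : Matrix (Fin 2) (Fin 2) ℂ := !![0, -Complex.I; Complex.I, 0]

/-- The Pauli matrix σz. -/
def sigmaZ : Matrix (Fin 2) (Fin 2) ℂ := !![1, 0; 0, -1]

/-- The spin-1/2 operator L_n = (n₁σx + n₂σy + n₃σz)/2 along the direction n ∈ ℝ³. -/
noncomputable def Lspin (n : Fin 3 → ℝ) : Matrix (Fin 2) (Fin 2) ℂ :=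
  (1 / 2 : ℂ) • ((n 0 : ℂ) • sigmaX + (n 1 : ℂ) • sigmaY + (n 2 : ℂ) • sigmaZ)

/-- A qubit density matrix: 2×2 positive semidefinite with unit trace. -/
def IsDensity (ρ : Matrix (Fin 2) (Fin 2) ℂ) : Prop :=
  ρ.PosSemidef ∧ ρ.trace = 1

/-- The rank-one projection |ψ⟩⟨ψ|. -/
def ketbra (ψ : Fin 2 → ℂ) : Matrix (Fin 2) (Fin 2) ℂ :=
  Matrix.vecMulVec ψ (star ψ)

/-- Pure-state variance (ΔA)²_ψ = ⟨ψ, A²ψ⟩ − ⟨ψ, Aψ⟩². -/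
noncomputable def pureVar (A : Matrix (Fin 2) (Fin 2) ℂ) (ψ : Fin 2 → ℂ) : ℝ :=
  (star ψ ⬝ᵥ (A * A).mulVec ψ).re - ((star ψ ⬝ᵥ A.mulVec ψ).re) ^ 2

/-- Mixed-state variance (ΔA)²_ρ = Tr(A²ρ) − (Tr(Aρ))². -/
noncomputable def mixVar (A ρ : Matrix (Fin 2) (Fin 2) ℂ) : ℝ :=
  ((A * A * ρ).trace).re - (((A * ρ).trace).re) ^ 2

/-- The purity Tr(ρ²). -/
noncomputable def purity (ρ : Matrix (Fin 2) (Fin 2) ℂ) : ℝ :=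
  ((ρ * ρ).trace).re

lemma ketbra_herm (ψ : Fin 2 → ℂ) : (ketbra ψ).IsHermitian := by
  ext i j
  simp [ketbra, Matrix.IsHermitian, conjTranspose_apply, vecMulVec_apply, mul_comm]

lemma trace_mul_ketbra (A : Matrix (Fin 2) (Fin 2) ℂ) (ψ : Fin 2 → ℂ) :
    (A * ketbra ψ).trace = star ψ ⬝ᵥ A.mulVec ψ := by
  simp [ketbra, trace, Matrix.mul_apply, vecMulVec_apply, dotProduct, mulVec,
    Fin.sum_univ_two]
  ring

lemma ketbra_trace (ψ : Fin 2 → ℂ) (h : star ψ ⬝ᵥ ψ = 1) : (ketbra ψ).trace = 1 := by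
  simp only [dotProduct, Pi.star_apply, Fin.sum_univ_two, Complex.star_def] at h
  simp [ketbra, trace, vecMulVec_apply, Fin.sum_univ_two]
  linear_combination h

lemma ketbra_proj (ψ : Fin 2 → ℂ) (h : star ψ ⬝ᵥ ψ = 1) :
    ketbra ψ * ketbra ψ = ketbra ψ := by
  simp [dotProduct, Fin.sum_univ_two] at h
  ext i j
  simp [ketbra, Matrix.mul_apply, vecMulVec_apply, Fin.sum_univ_two]
  linear_combination (ψ i * (starRingEnd ℂ) (ψ j)) * h

lemma Lsq (n : Fin 3 → ℝ) : Lspin n * Lspin n = (((n ⬝ᵥ n : ℝ) : ℂ)/4) • 1 := by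
  have hd : (n ⬝ᵥ n : ℝ) = n 0 ^2 + n 1 ^2 + n 2^2 := by
    simp [dotProduct, Fin.sum_univ_three]; ring
  ext i j
  fin_cases i <;> fin_cases j <;>
    simp [Lspin, sigmaX, sigmaY, sigmaZ, Matrix.mul_apply, Fin.sum_univ_two, hd,
        Matrix.one_apply] <;> push_cast <;> ring_nf <;> simp [Complex.I_sq] <;> ring_nf

lemma herm_entries (M : Matrix (Fin 2) (Fin 2) ℂ) (hM : M.IsHermitian) :
    M 1 0 = starRingEnd ℂ (M 0 1) ∧ (M 0 0).im = 0 ∧ (M 1 1).im = 0 := by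
  have h10 := hM.apply 1 0
  have h00 := congrArg Complex.im (hM.apply 0 0)
  have h11 := congrArg Complex.im (hM.apply 1 1)
  simp [Matrix.conjTranspose_apply] at h10 h00 h11
  exact ⟨h10.symm, by linarith, by linarith⟩

lemma trace_L_re (n : Fin 3 → ℝ) (M : Matrix (Fin 2) (Fin 2) ℂ) (hM : M.IsHermitian) :
    ((Lspin n * M).trace).re
      = (n 0 * (2*(M 0 1).re) + n 1 * (-2*(M 0 1).im)
          + n 2 * ((M 0 0).re - (M 1 1).re))/2 := by
  obtain ⟨h10, h00, h11⟩ := herm_entries M hM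
  simp [trace, Matrix.mul_apply, Lspin, sigmaX, sigmaY, sigmaZ, Fin.sum_univ_two, h10,
    Matrix.vecMul, dotProduct, Complex.add_re, Complex.mul_re, h00, h11]
  ring

lemma trace_sq_re (M : Matrix (Fin 2) (Fin 2) ℂ) (hM : M.IsHermitian) :
    2*((M*M).trace).re - ((M.trace).re)^2
      = (2*(M 0 1).re)^2 + (-2*(M 0 1).im)^2 + ((M 0 0).re - (M 1 1).re)^2 := by
  obtain ⟨h10, h00, h11⟩ := herm_entries M hM
  simp [trace, Matrix.mul_apply, Fin.sum_univ_two, h10, Matrix.vecMul, dotProduct,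
    Complex.add_re, Complex.mul_re, h00, h11]
  ring

lemma onb (n₁ n₂ n₃ : Fin 3 → ℝ)
    (h11 : n₁ ⬝ᵥ n₁ = 1) (h22 : n₂ ⬝ᵥ n₂ = 1) (h33 : n₃ ⬝ᵥ n₃ = 1)
    (h12 : n₁ ⬝ᵥ n₂ = 0) (h13 : n₁ ⬝ᵥ n₃ = 0) (h23 : n₂ ⬝ᵥ n₃ = 0) :
    ∀ i i' : Fin 3, n₁ i * n₁ i' + n₂ i * n₂ i' + n₃ i * n₃ i'
      = if i = i' then 1 else 0 := by
  simp only [dotProduct, Fin.sum_univ_three] at h11 h22 h33 h12 h13 h23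
  set N : Matrix (Fin 3) (Fin 3) ℝ := Matrix.of ![n₁, n₂, n₃] with hNdef
  have hN : N * Nᵀ = 1 := by
    ext j j'
    fin_cases j <;> fin_cases j' <;>
      simp [hNdef, Matrix.mul_apply, Matrix.transpose, Matrix.vecHead, Matrix.vecTail,
        Fin.sum_univ_three, Matrix.one_apply] <;>
      first
        | linear_combination h11 | linear_combination h22 | linear_combination h33
        | linear_combination h12 | linear_combination h13 | linear_combination h23
  have hN' : Nᵀ * N = 1 := mul_eq_one_comm.mp hN
  intro i i'
  have h := congrFun (congrFun hN' i) i'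
  simp only [Matrix.mul_apply, Fin.sum_univ_three, Matrix.transpose_apply,
    Matrix.one_apply, hNdef] at h
  simpa [mul_comm] using h

lemma key (a b c : Fin 3 → ℝ)
    (orth : ∀ i i' : Fin 3, a i * a i' + b i * b i' + c i * c i'
      = if i = i' then 1 else 0)
    (M : Matrix (Fin 2) (Fin 2) ℂ) (hM : M.IsHermitian) :
    ((Lspin a * M).trace).re^2 + ((Lspin b * M).trace).re^2
        + ((Lspin c * M).trace).re^2
      = (2*((M*M).trace).re - ((M.trace).re)^2)/4 := by
  have o00 : a 0 * a 0 + b 0 * b 0 + c 0 * c 0 = 1 := by simpa using orth 0 0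
  have o11 : a 1 * a 1 + b 1 * b 1 + c 1 * c 1 = 1 := by simpa using orth 1 1
  have o22 : a 2 * a 2 + b 2 * b 2 + c 2 * c 2 = 1 := by simpa using orth 2 2
  have o01 : a 0 * a 1 + b 0 * b 1 + c 0 * c 1 = 0 := by simpa using orth 0 1
  have o02 : a 0 * a 2 + b 0 * b 2 + c 0 * c 2 = 0 := by simpa using orth 0 2
  have o12 : a 1 * a 2 + b 1 * b 2 + c 1 * c 2 = 0 := by simpa using orth 1 2
  rw [trace_L_re a M hM, trace_L_re b M hM, trace_L_re c M hM, trace_sq_re M hM]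
  set x := 2*(M 0 1).re
  set y := -2*(M 0 1).im
  set z := (M 0 0).re - (M 1 1).re
  linear_combination (x^2/4) * o00 + (y^2/4) * o11 + (z^2/4) * o22
    + (x*y/2) * o01 + (x*z/2) * o02 + (y*z/2) * o12

lemma pureVar_eq (n : Fin 3 → ℝ) (hn : n ⬝ᵥ n = 1) (ψ : Fin 2 → ℂ)
    (hψ : star ψ ⬝ᵥ ψ = 1) :
    pureVar (Lspin n) ψ = 1/4 - (((Lspin n * ketbra ψ).trace).re)^2 := by
  rw [pureVar, trace_mul_ketbra, Lsq n, hn]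
  simp [Matrix.smul_mulVec, Matrix.one_mulVec, dotProduct_smul, hψ]

lemma mixVar_eq (n : Fin 3 → ℝ) (hn : n ⬝ᵥ n = 1) (ρ : Matrix (Fin 2) (Fin 2) ℂ)
    (htr : ρ.trace = 1) :
    mixVar (Lspin n) ρ = 1/4 - (((Lspin n * ρ).trace).re)^2 := by
  rw [mixVar, Lsq n, hn]
  simp [smul_mul_assoc, Matrix.trace_smul, htr]


/-- A pure-state decomposition of a qubit attains the minimal average variance
(the convex roof, (1/4)F_Q[ρ,L_{n₁}] = (ΔL_{n₁})²_ρ − (1 − Tr ρ²)/2) in direction n₁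
iff it attains the maximal average variance (the concave roof) in both orthogonal
directions n₂ and n₃. -/
theorem stmt_18 (n₁ n₂ n₃ : Fin 3 → ℝ)
    (h11 : n₁ ⬝ᵥ n₁ = 1) (h22 : n₂ ⬝ᵥ n₂ = 1) (h33 : n₃ ⬝ᵥ n₃ = 1)
    (h12 : n₁ ⬝ᵥ n₂ = 0) (h13 : n₁ ⬝ᵥ n₃ = 0) (h23 : n₂ ⬝ᵥ n₃ = 0)
    (ρ : Matrix (Fin 2) (Fin 2) ℂ) (hρ : IsDensity ρ)
    (m : ℕ) (p : Fin m → ℝ) (ψ : Fin m → (Fin 2 → ℂ))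
    (hp : ∀ k, 0 ≤ p k) (hp1 : (∑ k, p k) = 1)
    (hψ : ∀ k, star (ψ k) ⬝ᵥ ψ k = 1)
    (hdec : ρ = ∑ k, p k • ketbra (ψ k)) :
    (∑ k, p k * pureVar (Lspin n₁) (ψ k))
        = mixVar (Lspin n₁) ρ - (1 - purity ρ) / 2 ↔
      ((∑ k, p k * pureVar (Lspin n₂) (ψ k)) = mixVar (Lspin n₂) ρ ∧
       (∑ k, p k * pureVar (Lspin n₃) (ψ k)) = mixVar (Lspin n₃) ρ) := by
  have hherm : ρ.IsHermitian := hρ.1.1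
  have htr : ρ.trace = 1 := hρ.2
  have orth := onb n₁ n₂ n₃ h11 h22 h33 h12 h13 h23
  -- E as average of e
  have hEavg : ∀ n : Fin 3 → ℝ, ((Lspin n * ρ).trace).re
      = ∑ k, p k * ((Lspin n * ketbra (ψ k)).trace).re := by
    intro n
    simp only [hdec, Matrix.mul_sum, Matrix.mul_smul, Matrix.trace_sum,
      Matrix.trace_smul, Complex.re_sum]
    congr 1; funext k
    simp [Complex.real_smul]
  -- per-state sum rule
  have hsum_e : ∀ k, (((Lspin n₁ * ketbra (ψ k)).trace).re)^2
      + (((Lspin n₂ * ketbra (ψ k)).trace).re)^2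
      + (((Lspin n₃ * ketbra (ψ k)).trace).re)^2 = 1/4 := by
    intro k
    have hk := key n₁ n₂ n₃ orth (ketbra (ψ k)) (ketbra_herm (ψ k))
    rw [ketbra_proj (ψ k) (hψ k), ketbra_trace (ψ k) (hψ k)] at hk
    simp only [Complex.one_re] at hk
    linarith [hk]
  -- sum rule for ρ
  have hsum_E : (((Lspin n₁ * ρ).trace).re)^2 + (((Lspin n₂ * ρ).trace).re)^2
      + (((Lspin n₃ * ρ).trace).re)^2 = (2 * purity ρ - 1)/4 := by
    have hk := key n₁ n₂ n₃ orth ρ hherm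
    rw [htr] at hk
    simp only [Complex.one_re, purity] at hk ⊢
    linarith [hk]
  -- Cauchy-Schwarz
  have hCS : ∀ n : Fin 3 → ℝ, (((Lspin n * ρ).trace).re)^2
      ≤ ∑ k, p k * (((Lspin n * ketbra (ψ k)).trace).re)^2 := by
    intro n
    have h := Finset.sum_mul_sq_le_sq_mul_sq Finset.univ
      (fun k => Real.sqrt (p k))
      (fun k => Real.sqrt (p k) * ((Lspin n * ketbra (ψ k)).trace).re)
    have h1 : ∀ k : Fin m, Real.sqrt (p k)
        * (Real.sqrt (p k) * ((Lspin n * ketbra (ψ k)).trace).re)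
        = p k * ((Lspin n * ketbra (ψ k)).trace).re := by
      intro k; rw [← mul_assoc, Real.mul_self_sqrt (hp k)]
    have h2 : ∀ k : Fin m, (Real.sqrt (p k))^2 = p k := fun k => Real.sq_sqrt (hp k)
    have h3 : ∀ k : Fin m, (Real.sqrt (p k) * ((Lspin n * ketbra (ψ k)).trace).re)^2
        = p k * (((Lspin n * ketbra (ψ k)).trace).re)^2 := by
      intro k; rw [mul_pow, h2]
    simp only [h1, h3, h2, hp1, one_mul] at h
    rw [hEavg]
    exact h
  -- rewrite pure variance sums
  have hrw1 : ∀ n, n ⬝ᵥ n = 1 →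
      (∑ k, p k * pureVar (Lspin n) (ψ k))
        = 1/4 - ∑ k, p k * (((Lspin n * ketbra (ψ k)).trace).re)^2 := by
    intro n hn
    have hterm : ∀ k : Fin m, p k * pureVar (Lspin n) (ψ k)
        = p k * (1/4) - p k * (((Lspin n * ketbra (ψ k)).trace).re)^2 := by
      intro k; rw [pureVar_eq n hn (ψ k) (hψ k)]; ring
    simp only [hterm, Finset.sum_sub_distrib, ← Finset.sum_mul, hp1]
    ring
  -- total of the averaged squares
  have hS : (∑ k, p k * (((Lspin n₁ * ketbra (ψ k)).trace).re)^2)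
      + (∑ k, p k * (((Lspin n₂ * ketbra (ψ k)).trace).re)^2)
      + (∑ k, p k * (((Lspin n₃ * ketbra (ψ k)).trace).re)^2) = 1/4 := by
    rw [← Finset.sum_add_distrib, ← Finset.sum_add_distrib]
    have hterm : ∀ k : Fin m,
        p k * (((Lspin n₁ * ketbra (ψ k)).trace).re)^2
          + p k * (((Lspin n₂ * ketbra (ψ k)).trace).re)^2
          + p k * (((Lspin n₃ * ketbra (ψ k)).trace).re)^2 = p k * (1/4) := by
      intro k
      linear_combination (p k) * hsum_e k
    simp only [hterm, ← Finset.sum_mul, hp1]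
    ring
  rw [hrw1 n₁ h11, hrw1 n₂ h22, hrw1 n₃ h33, mixVar_eq n₁ h11 ρ htr,
    mixVar_eq n₂ h22 ρ htr, mixVar_eq n₃ h33 ρ htr]
  have c1 := hCS n₁
  have c2 := hCS n₂
  have c3 := hCS n₃
  constructor
  · intro h
    constructor <;> linarith
  · rintro ⟨g2, g3⟩
    linarith
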